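/- Let Q be an abelian group and let q ∈ Q be a non-zero element such that every non-trivial subgroup of Q contains q. Then Q is either a cyclic group of prime-power order or is isomorphic, for some prime p, to the Prüfer p-group ℤ[1/p]/ℤ of all p-power-order roots of unity. -/

import Mathlib

/-- The Prüfer `p`-group `ℤ[1/p]/ℤ`, realised as the subgroup of the circle group `ℝ/ℤ`
consisting of all elements killed by some power of `p` (equivalently, all `p^k`-th roots
of unity for all `k ≥ 0`). -/
noncomputable def pruferGroup (p : ℕ) : AddSubgroup (AddCircle (1 : ℝ)) where
  carrier := {x | ∃ k : ℕ, (p ^ k : ℕ) • x = 0}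
  zero_mem' := ⟨0, smul_zero _⟩
  add_mem' := by
    rintro a b ⟨k, hk⟩ ⟨l, hl⟩
    refine ⟨k + l, ?_⟩
    have h1 : (p ^ (k + l) : ℕ) • a = 0 := by
      rw [add_comm, pow_add, mul_smul, hk, smul_zero]
    have h2 : (p ^ (k + l) : ℕ) • b = 0 := by
      rw [pow_add, mul_smul, hl, smul_zero]
    rw [smul_add, h1, h2, add_zero]
  neg_mem' := by
    rintro a ⟨k, hk⟩
    exact ⟨k, by rw [smul_neg, hk, neg_zero]⟩

/-! Every non-zero `x : Q` has `q` among its multiples. Hence `Q` is torsion, `q` has prime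
order `p`, and the order of every element is a power of `p`. As `ℝ/ℤ` is divisible, hence an
injective `ℤ`-module, some character `Q → ℝ/ℤ` does not vanish at `q`; its kernel misses `q`, so
it is trivial, and `Q` embeds into the Prüfer group. There, an element of order `n` generates the
whole `n`-torsion, so a subgroup is either generated by an element of maximal order, or contains
elements of unbounded order and is everything. -/

open AddSubgroup

theorem AddCircle.mem_zmultiples_of_addOrderOf_nsmul_eq_zero {𝕜 : Type*} [AddCommGroup 𝕜]
    [IsAddTorsionFree 𝕜] {p : 𝕜} {x y : AddCircle p} (hx : 0 < addOrderOf x)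
    (hy : addOrderOf x • y = 0) : y ∈ zmultiples x := by
  have hreg : IsSMulRegular 𝕜 (addOrderOf x) := IsAddTorsionFree.nsmul_right_injective hx.ne'
  have hsub : (zmultiples x : Set (AddCircle p)) ⊆ {z | addOrderOf x • z = 0} := by
    rintro _ ⟨k, rfl⟩
    simp [smul_comm (addOrderOf x) k x]
  have hcard : (zmultiples x : Set (AddCircle p)).encard = addOrderOf x := by
    rw [← (addOrderOf_pos_iff.mp hx).finite_zmultiples.cast_ncard_eq, ← Nat.card_coe_set_eq,
      SetLike.coe_sort_coe, Nat.card_zmultiples]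
  -- `zmultiples x` has `n` elements, the `n`-torsion of the circle at most `n`
  have htorsion := (finite_torsion_of_isSMulRegular p _ hreg).eq_of_subset_of_encard_le' hsub
    (hcard ▸ card_torsion_le_of_isSMulRegular p _ hx.ne' hreg)
  rw [← SetLike.mem_coe, htorsion]
  exact hy

theorem exists_addOrderOf_eq_pow_of_mem_pruferGroup {p : ℕ} (hp : p.Prime)
    {x : AddCircle (1 : ℝ)} (hx : x ∈ pruferGroup p) : ∃ k, addOrderOf x = p ^ k := by
  obtain ⟨k, hk⟩ := hx
  obtain ⟨j, -, hj⟩ := (Nat.dvd_prime_pow hp).mp (addOrderOf_dvd_of_nsmul_eq_zero hk)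
  exact ⟨j, hj⟩

theorem eq_pruferGroup_or_nonempty_addEquiv_zmod {p : ℕ} (hp : p.Prime)
    {H : AddSubgroup (AddCircle (1 : ℝ))} (hH : H ≤ pruferGroup p) :
    H = pruferGroup p ∨ ∃ k, Nonempty (H ≃+ ZMod (p ^ k)) := by
  by_cases hexp : AddMonoid.ExponentExists H
  · obtain ⟨h, hh⟩ := AddMonoid.exists_addOrderOf_eq_exponent hexp
    obtain ⟨k, hk⟩ := exists_addOrderOf_eq_pow_of_mem_pruferGroup hp (hH h.2)
    rw [addOrderOf_coe] at hk
    have hgen : ∀ x : H, x ∈ zmultiples h := by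
      intro x
      have hx : addOrderOf (h : AddCircle (1 : ℝ)) • (x : AddCircle (1 : ℝ)) = 0 := by
        rw [addOrderOf_coe, hh, ← coe_nsmul, AddMonoid.exponent_nsmul_eq_zero, coe_zero]
      obtain ⟨m, hm⟩ := AddCircle.mem_zmultiples_of_addOrderOf_nsmul_eq_zero
        (by rw [addOrderOf_coe, hk]; exact pow_pos hp.pos k) hx
      exact ⟨m, Subtype.ext hm⟩
    rw [addOrderOf_eq_card_of_forall_mem_zmultiples hgen] at hk
    exact Or.inr ⟨k, ⟨(zmodAddEquivOfGenerator hgen hk).symm⟩⟩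
  · refine Or.inl (le_antisymm hH fun y ⟨k, hk⟩ ↦ ?_)
    obtain ⟨h, hh⟩ : ∃ h : H, (p ^ k : ℕ) • h ≠ 0 := by
      by_contra! hbound
      exact hexp ⟨p ^ k, pow_pos hp.pos k, hbound⟩
    obtain ⟨j, hj⟩ := exists_addOrderOf_eq_pow_of_mem_pruferGroup hp (hH h.2)
    rw [addOrderOf_coe] at hj
    have hkj : k < j := by
      by_contra! hjk
      exact hh (addOrderOf_dvd_iff_nsmul_eq_zero.mp (hj ▸ Nat.pow_dvd_pow p hjk))
    have hy : addOrderOf (h : AddCircle (1 : ℝ)) • y = 0 := by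
      rw [addOrderOf_coe, hj, ← addOrderOf_dvd_iff_nsmul_eq_zero]
      exact (addOrderOf_dvd_of_nsmul_eq_zero hk).trans (Nat.pow_dvd_pow p hkj.le)
    have hpos : 0 < addOrderOf (h : AddCircle (1 : ℝ)) := by
      rw [addOrderOf_coe, hj]; exact pow_pos hp.pos j
    exact zmultiples_le.mpr h.2 (AddCircle.mem_zmultiples_of_addOrderOf_nsmul_eq_zero hpos hy)

theorem exists_addMonoidHom_addCircle_ne_zero {G : Type*} [AddCommGroup G] {x : G}
    (hx : IsOfFinAddOrder x) (hx0 : x ≠ 0) : ∃ f : G →+ AddCircle (1 : ℝ), f x ≠ 0 := by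
  have : NeZero (addOrderOf x) := ⟨hx.addOrderOf_pos.ne'⟩
  let ι : ZMod (addOrderOf x) →+ G := ZMod.lift _ ⟨zmultiplesHom G x, by simp⟩
  have hι : Function.Injective ι := by
    rw [ZMod.lift_injective]
    intro m hm
    rw [ZMod.intCast_zmod_eq_zero_iff_dvd]
    exact addOrderOf_dvd_iff_zsmul_eq_zero.mpr hm
  obtain ⟨f, hf⟩ :=
    (Module.Baer.of_divisible _).extension_property_addMonoidHom ι hι ZMod.toAddCircle
  refine ⟨f, fun hfx ↦ hx0 ?_⟩
  have hι1 : ι 1 = x := by simpa using ZMod.lift_coe _ ⟨zmultiplesHom G x, by simp⟩ 1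
  have h1 : (1 : ZMod (addOrderOf x)) = 0 := by
    rw [← ZMod.toAddCircle_eq_zero, ← hf, AddMonoidHom.comp_apply, hι1, hfx]
  rw [← hι1, h1, map_zero]

section ForallNeBot

variable {Q : Type*} [AddCommGroup Q] {q : Q}

theorem mem_zmultiples_of_forall_ne_bot (hmin : ∀ S : AddSubgroup Q, S ≠ ⊥ → q ∈ S) {x : Q}
    (hx : x ≠ 0) : q ∈ zmultiples x :=
  hmin _ (zmultiples_ne_bot.mpr hx)

theorem isOfFinAddOrder_of_forall_ne_bot (hmin : ∀ S : AddSubgroup Q, S ≠ ⊥ → q ∈ S) :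
    IsOfFinAddOrder q := by
  by_cases h2 : 2 • q = 0
  · exact isOfFinAddOrder_iff_nsmul_eq_zero.mpr ⟨2, two_pos, h2⟩
  obtain ⟨m, hm⟩ := mem_zmultiples_iff.mp (mem_zmultiples_of_forall_ne_bot hmin h2)
  refine isOfFinAddOrder_iff_zsmul_eq_zero.mpr ⟨2 * m - 1, by omega, ?_⟩
  rw [sub_smul, one_smul, mul_comm, mul_smul, two_zsmul, ← two_nsmul, hm, sub_self]

theorem isAddTorsion_of_forall_ne_bot (hq : q ≠ 0) (hmin : ∀ S : AddSubgroup Q, S ≠ ⊥ → q ∈ S) :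
    IsAddTorsion Q := by
  intro x
  rcases eq_or_ne x 0 with rfl | hx
  · exact IsOfFinAddOrder.zero
  obtain ⟨m, hm⟩ := mem_zmultiples_iff.mp (mem_zmultiples_of_forall_ne_bot hmin hx)
  have hm0 : m ≠ 0 := by
    rintro rfl
    exact hq (by simpa using hm.symm)
  have hq0 := (isOfFinAddOrder_of_forall_ne_bot hmin).addOrderOf_pos.ne'
  refine isOfFinAddOrder_iff_zsmul_eq_zero.mpr ⟨addOrderOf q * m, by positivity, ?_⟩
  rw [mul_smul, hm, natCast_zsmul, addOrderOf_nsmul_eq_zero]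

theorem addOrderOf_eq_of_prime_dvd (hq : q ≠ 0) (hmin : ∀ S : AddSubgroup Q, S ≠ ⊥ → q ∈ S)
    {x : Q} {ℓ : ℕ} (hℓ : ℓ.Prime) (hdvd : ℓ ∣ addOrderOf x) : addOrderOf q = ℓ := by
  have hx := (isAddTorsion_of_forall_ne_bot hq hmin x).addOrderOf_pos
  have hy : addOrderOf ((addOrderOf x / ℓ) • x) = ℓ := by
    rw [addOrderOf_nsmul_of_dvd (Nat.div_pos (Nat.le_of_dvd hx hdvd) hℓ.pos).ne'
      (Nat.div_dvd_of_dvd hdvd), Nat.div_div_self hdvd hx.ne']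
  have hy0 : (addOrderOf x / ℓ) • x ≠ 0 := by
    intro h
    rw [h, addOrderOf_zero] at hy
    exact hℓ.one_lt.ne hy
  have hqℓ := addOrderOf_dvd_of_mem_zmultiples (mem_zmultiples_of_forall_ne_bot hmin hy0)
  rw [hy] at hqℓ
  exact ((Nat.dvd_prime hℓ).mp hqℓ).resolve_left (mt AddMonoid.addOrderOf_eq_one_iff.mp hq)

theorem prime_addOrderOf_of_forall_ne_bot (hq : q ≠ 0)
    (hmin : ∀ S : AddSubgroup Q, S ≠ ⊥ → q ∈ S) : (addOrderOf q).Prime := by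
  have h1 : addOrderOf q ≠ 1 := mt AddMonoid.addOrderOf_eq_one_iff.mp hq
  rw [addOrderOf_eq_of_prime_dvd hq hmin (Nat.minFac_prime h1) (Nat.minFac_dvd _)]
  exact Nat.minFac_prime h1

theorem exists_pow_addOrderOf_nsmul_eq_zero (hq : q ≠ 0)
    (hmin : ∀ S : AddSubgroup Q, S ≠ ⊥ → q ∈ S) (x : Q) : ∃ k, addOrderOf q ^ k • x = 0 := by
  have hx := (isAddTorsion_of_forall_ne_bot hq hmin x).addOrderOf_pos.ne'
  have hpow := Nat.eq_prime_pow_of_unique_prime_dvd hx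
    fun hd hdvd ↦ (addOrderOf_eq_of_prime_dvd hq hmin hd hdvd).symm
  exact ⟨_, hpow ▸ addOrderOf_nsmul_eq_zero x⟩

theorem injective_of_forall_ne_bot_of_map_ne_zero (hmin : ∀ S : AddSubgroup Q, S ≠ ⊥ → q ∈ S)
    {A : Type*} [AddGroup A] (f : Q →+ A) (hf : f q ≠ 0) : Function.Injective f := by
  rw [← AddMonoidHom.ker_eq_bot_iff]
  by_contra h
  exact hf (hmin _ h)

end ForallNeBot

/-- If `Q` is an abelian group with a non-zero element `q` contained in every non-trivial
subgroup, then `Q` is either cyclic of prime-power order or isomorphic to a Prüfer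
`p`-group for some prime `p`. -/
theorem cyclic_or_prufer_of_min_element {Q : Type*} [AddCommGroup Q]
    (q : Q) (hq : q ≠ 0) (hmin : ∀ S : AddSubgroup Q, S ≠ ⊥ → q ∈ S) :
    (∃ p k : ℕ, p.Prime ∧ Nonempty (Q ≃+ ZMod (p ^ k))) ∨
    (∃ p : ℕ, p.Prime ∧ Nonempty (Q ≃+ pruferGroup p)) := by
  set p := addOrderOf q
  have hp : p.Prime := prime_addOrderOf_of_forall_ne_bot hq hmin
  obtain ⟨f, hf⟩ :=
    exists_addMonoidHom_addCircle_ne_zero (isOfFinAddOrder_of_forall_ne_bot hmin) hq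
  let e : Q ≃+ f.range :=
    AddMonoidHom.ofInjective (injective_of_forall_ne_bot_of_map_ne_zero hmin f hf)
  have hrange : f.range ≤ pruferGroup p := by
    rintro _ ⟨x, rfl⟩
    obtain ⟨k, hk⟩ := exists_pow_addOrderOf_nsmul_eq_zero hq hmin x
    exact ⟨k, by rw [← map_nsmul, hk, map_zero]⟩
  rcases eq_pruferGroup_or_nonempty_addEquiv_zmod hp hrange with h | ⟨k, ⟨e'⟩⟩
  · exact Or.inr ⟨p, hp, ⟨e.trans (AddEquiv.addSubgroupCongr h)⟩⟩
  · exact Or.inl ⟨p, k, hp, ⟨e.trans e'⟩⟩
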